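/- arXiv:1907.12988 — 4 statements merged into one kernel-verified Lean document; each statement's English description precedes it below -/
import Mathlib

section
/- Let p ≥ 1, and let lo, hi : Fin p → ℝ satisfy lo j < hi j for every j. Let P = {ρ : Fin p → ℝ | ∀ j, lo j ≤ ρ j ≤ hi j}, and for each j let c_j be the multivariate real polynomial c_j = (hi j − X_j)·(X_j − lo j) in the variables X_1,…,X_p. Let f_1,…,f_m be multivariate real polynomials in X_1,…,X_p. Then f_i(ρ) > 0 for every i = 1,…,m and every ρ ∈ P if and only if there exist a real number θ > 0 and multivariate polynomials s_{ij} (i = 1,…,m, j = 1,…,p), each of which is a sum of squares of polynomials, such that for every i the polynomial f_i − ∑_{j=1}^p s_{ij}·c_j − θ is a sum of squares of polynomials. -/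
open MvPolynomial

/-- A multivariate real polynomial is a sum of squares if it is a finite sum
of squares of multivariate real polynomials. -/
def IsSOS {p : ℕ} (q : MvPolynomial (Fin p) ℝ) : Prop :=
  ∃ (k : ℕ) (g : Fin k → MvPolynomial (Fin p) ℝ), q = ∑ i, (g i) ^ 2


namespace Putinar

variable {p : ℕ}

abbrev A (p : ℕ) := MvPolynomial (Fin p) ℝ

lemma sos_zero : IsSOS (0 : A p) := ⟨0, ![], by simp⟩

lemma sos_sq (g : A p) : IsSOS (g ^ 2) := ⟨1, ![g], by simp⟩

lemma sos_add {a b : A p} (ha : IsSOS a) (hb : IsSOS b) : IsSOS (a + b) := by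
  obtain ⟨k, g, rfl⟩ := ha
  obtain ⟨l, h, rfl⟩ := hb
  refine ⟨k + l, Fin.append g h, ?_⟩
  rw [Fin.sum_univ_add]
  congr 1
  · exact Finset.sum_congr rfl fun i _ => by rw [Fin.append_left]
  · exact Finset.sum_congr rfl fun i _ => by rw [Fin.append_right]

lemma sos_mul {a b : A p} (ha : IsSOS a) (hb : IsSOS b) : IsSOS (a * b) := by
  obtain ⟨k, g, rfl⟩ := ha
  obtain ⟨l, h, rfl⟩ := hb
  refine ⟨k * l, fun i => g (finProdFinEquiv.symm i).1 * h (finProdFinEquiv.symm i).2, ?_⟩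
  rw [Finset.sum_mul_sum, ← finProdFinEquiv.sum_comp, Fintype.sum_prod_type]
  refine Finset.sum_congr rfl fun i _ => Finset.sum_congr rfl fun j _ => ?_
  simp [mul_pow]

lemma sos_one : IsSOS (1 : A p) := by
  have : (1 : A p) = 1^2 := by ring
  rw [this]; exact sos_sq 1

lemma sos_const {r : ℝ} (hr : 0 ≤ r) : IsSOS (C r : A p) := by
  have : (C r : A p) = (C (Real.sqrt r)) ^ 2 := by
    rw [← C_pow, sq, Real.mul_self_sqrt hr]
  exact this ▸ sos_sq _

lemma sos_smul {r : ℝ} {a : A p} (hr : 0 ≤ r) (ha : IsSOS a) : IsSOS (C r * a) :=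
  sos_mul (sos_const hr) ha

lemma sos_eval_nonneg {a : A p} (ha : IsSOS a) (ρ : Fin p → ℝ) : 0 ≤ eval ρ a := by
  obtain ⟨k, g, rfl⟩ := ha
  rw [map_sum]
  exact Finset.sum_nonneg fun i _ => by rw [map_pow]; positivity


/-! ### The quadratic module of the unit box -/

/-- generator for unit box -/
noncomputable def cU (j : Fin p) : A p := X j * (1 - X j)

/-- membership in the quadratic module generated by the `cU j` -/
def InM (h : A p) : Prop :=
  ∃ σ : A p, ∃ s : Fin p → A p, IsSOS σ ∧ (∀ j, IsSOS (s j)) ∧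
    h = σ + ∑ j, s j * cU j

lemma inM_sos {a : A p} (ha : IsSOS a) : InM a :=
  ⟨a, fun _ => 0, ha, fun _ => sos_zero, by simp⟩

lemma inM_add {a b : A p} (ha : InM a) (hb : InM b) : InM (a + b) := by
  obtain ⟨σ, s, hσ, hs, rfl⟩ := ha
  obtain ⟨τ, t, hτ, ht, rfl⟩ := hb
  refine ⟨σ + τ, fun j => s j + t j, sos_add hσ hτ, fun j => sos_add (hs j) (ht j), ?_⟩
  have e : ∑ j, (s j + t j) * cU j = (∑ j, s j * cU j) + ∑ j, t j * cU j := by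
    rw [← Finset.sum_add_distrib]
    exact Finset.sum_congr rfl fun j _ => by ring
  rw [e]; ring

lemma inM_gen (j : Fin p) : InM (cU j) := by
  refine ⟨0, fun i => if i = j then 1 else 0, sos_zero, ?_, ?_⟩
  · intro i
    dsimp only
    by_cases h : i = j
    · rw [if_pos h]; exact sos_one
    · rw [if_neg h]; exact sos_zero
  · have e : ∀ i, (if i = j then (1:A p) else 0) * cU i = if i = j then cU i else 0 := by
      intro i; by_cases h : i = j <;> simp [h]
    rw [Finset.sum_congr rfl fun i _ => e i, Finset.sum_ite_eq' Finset.univ j cU]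
    simp

lemma inM_mul_sos {a q : A p} (ha : InM a) (hq : IsSOS q) : InM (q * a) := by
  obtain ⟨σ, s, hσ, hs, rfl⟩ := ha
  refine ⟨q * σ, fun j => q * s j, sos_mul hq hσ, fun j => sos_mul hq (hs j), ?_⟩
  rw [mul_add, Finset.mul_sum]
  congr 1
  exact Finset.sum_congr rfl fun j _ => by ring

lemma inM_smul {r : ℝ} {a : A p} (hr : 0 ≤ r) (ha : InM a) : InM (C r * a) :=
  inM_mul_sos ha (sos_const hr)

lemma inM_const {r : ℝ} (hr : 0 ≤ r) : InM (C r : A p) := inM_sos (sos_const hr)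

lemma inM_eval_nonneg {a : A p} (ha : InM a) {ρ : Fin p → ℝ}
    (hρ : ∀ j, 0 ≤ ρ j ∧ ρ j ≤ 1) : 0 ≤ eval ρ a := by
  obtain ⟨σ, s, hσ, hs, rfl⟩ := ha
  rw [map_add, map_sum]
  have h1 : 0 ≤ eval ρ σ := sos_eval_nonneg hσ ρ
  have h2 : ∀ j ∈ (Finset.univ : Finset (Fin p)), (0:ℝ) ≤ eval ρ (s j * cU j) := by
    intro j _
    rw [map_mul]
    refine mul_nonneg (sos_eval_nonneg (hs j) ρ) ?_
    simp only [cU, map_mul, map_sub, map_one, eval_X]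
    have := hρ j
    nlinarith [this.1, this.2]
  exact add_nonneg h1 (Finset.sum_nonneg h2)

end Putinar

namespace Putinar

variable {p : ℕ}

/-! ### Archimedean property -/

/-- `h` is bounded w.r.t. the module -/
def Bdd (h : A p) : Prop := ∃ N : ℝ, InM (C N - h) ∧ InM (C N + h)

lemma inM_X (j : Fin p) : InM (X j : A p) := by
  have : (X j : A p) = (X j)^2 + cU j := by unfold cU; ring
  rw [this]
  exact inM_add (inM_sos (sos_sq _)) (inM_gen j)

lemma inM_one_sub_X (j : Fin p) : InM (1 - X j : A p) := by
  have : (1 - X j : A p) = (1 - X j)^2 + cU j := by unfold cU; ring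
  rw [this]
  exact inM_add (inM_sos (sos_sq _)) (inM_gen j)

lemma bdd_mono {h : A p} {N N' : ℝ} (hN : N ≤ N') (h1 : InM (C N - h)) :
    InM (C N' - h) := by
  have : (C N' - h : A p) = C (N' - N) + (C N - h) := by
    rw [map_sub]; ring
  rw [this]
  exact inM_add (inM_const (by linarith)) h1

lemma bdd_sq {a : A p} (ha : Bdd a) : ∃ K : ℝ, InM (C K - a^2) := by
  obtain ⟨N, h1, h2⟩ := ha
  -- enlarge N to be ≥ 1
  set N' := max N 1 with hN'
  have hN'1 : (1:ℝ) ≤ N' := le_max_right _ _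
  have h1' : InM (C N' - a) := bdd_mono (le_max_left _ _) h1
  have h2' : InM (C N' + a) := by
    have : (C N' + a : A p) = C (N' - N) + (C N + a) := by rw [map_sub]; ring
    rw [this]
    exact inM_add (inM_const (sub_nonneg.2 (le_max_left N 1))) h2
  refine ⟨N'^2, ?_⟩
  have key : C (2*N') * (C (N'^2) - a^2) =
      (C N' - a)^2 * (C N' + a) + (C N' + a)^2 * (C N' - a) := by
    rw [C_mul, C_pow, map_ofNat]; ring
  have hmem : InM ((C N' - a)^2 * (C N' + a) + (C N' + a)^2 * (C N' - a)) :=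
    inM_add (inM_mul_sos h2' (sos_sq _)) (inM_mul_sos h1' (sos_sq _))
  have h2N : (0:ℝ) < 2 * N' := by linarith
  have := inM_smul (r := (2*N')⁻¹) (by positivity) hmem
  rw [← key, ← mul_assoc, ← map_mul, inv_mul_cancel₀ (ne_of_gt h2N), map_one, one_mul] at this
  exact this

lemma bdd_neg {a : A p} (ha : Bdd a) : Bdd (-a) := by
  obtain ⟨N, h1, h2⟩ := ha
  exact ⟨N, by simpa [sub_neg_eq_add] using h2, by simpa [sub_eq_add_neg] using h1⟩

lemma bdd_add {a b : A p} (ha : Bdd a) (hb : Bdd b) : Bdd (a + b) := by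
  obtain ⟨N, h1, h2⟩ := ha
  obtain ⟨N', h1', h2'⟩ := hb
  refine ⟨N + N', ?_, ?_⟩
  · have : (C (N+N') - (a+b) : A p) = (C N - a) + (C N' - b) := by rw [map_add]; ring
    rw [this]; exact inM_add h1 h1'
  · have : (C (N+N') + (a+b) : A p) = (C N + a) + (C N' + b) := by rw [map_add]; ring
    rw [this]; exact inM_add h2 h2'

lemma bdd_mul {a b : A p} (ha : Bdd a) (hb : Bdd b) : Bdd (a * b) := by
  obtain ⟨K, hK⟩ := bdd_sq (bdd_add ha (bdd_neg hb))   -- K - (a-b)^2 ∈ M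
  obtain ⟨K', hK'⟩ := bdd_sq (bdd_add ha hb)           -- K' - (a+b)^2 ∈ M
  have h4 : (4 : A p) = C (4:ℝ) := (map_ofNat C 4).symm
  have e1 : (a + b)^2 + (C K - (a + (-b))^2) = C K + 4*(a*b) := by ring
  have e2 : (a + (-b))^2 + (C K' - (a + b)^2) = C K' - 4*(a*b) := by ring
  have m1 : InM (C K + 4*(a*b)) := by
    rw [← e1]; exact inM_add (inM_sos (sos_sq _)) hK
  have m2 : InM (C K' - 4*(a*b)) := by
    rw [← e2]; exact inM_add (inM_sos (sos_sq _)) hK'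
  have q1 : InM (C ((4:ℝ)⁻¹ * K) + a*b) := by
    have e : C ((4:ℝ)⁻¹) * (C K + 4*(a*b)) = C ((4:ℝ)⁻¹ * K) + a*b := by
      rw [h4, mul_add, ← C_mul, ← mul_assoc, ← C_mul]
      norm_num
    rw [← e]; exact inM_smul (by norm_num) m1
  have q2 : InM (C ((4:ℝ)⁻¹ * K') - a*b) := by
    have e : C ((4:ℝ)⁻¹) * (C K' - 4*(a*b)) = C ((4:ℝ)⁻¹ * K') - a*b := by
      rw [h4, mul_sub, ← C_mul, ← mul_assoc, ← C_mul]
      norm_num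
    rw [← e]; exact inM_smul (by norm_num) m2
  refine ⟨max ((4:ℝ)⁻¹ * K) ((4:ℝ)⁻¹ * K'), bdd_mono (le_max_right _ _) q2, ?_⟩
  have : (C (max ((4:ℝ)⁻¹ * K) ((4:ℝ)⁻¹ * K')) + a*b : A p)
      = C (max ((4:ℝ)⁻¹ * K) ((4:ℝ)⁻¹ * K') - (4:ℝ)⁻¹ * K) + (C ((4:ℝ)⁻¹ * K) + a*b) := by
    rw [map_sub]; ring
  rw [this]
  exact inM_add (inM_const (sub_nonneg.2 (le_max_left _ _))) q1

lemma bdd_all (h : A p) : Bdd h := by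
  induction h using MvPolynomial.induction_on with
  | C r =>
      refine ⟨|r|, ?_, ?_⟩
      · rw [← map_sub]; exact inM_const (sub_nonneg.2 (le_abs_self r))
      · rw [← map_add]; exact inM_const (by linarith [neg_abs_le r])
  | add f g hf hg => exact bdd_add hf hg
  | mul_X f j hf =>
      refine bdd_mul hf ⟨1, ?_, ?_⟩
      · rw [C_1]; exact inM_one_sub_X j
      · rw [C_1]
        exact inM_add (inM_sos sos_one) (inM_X j)

/-- Archimedean: every polynomial is dominated by a constant within M -/
lemma arch (h : A p) : ∃ N : ℝ, InM (C N - h) := (bdd_all h).imp fun _ h => h.1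

end Putinar

namespace Putinar

variable {p : ℕ}

/-- cone `M - ℝ≥0 · f` -/
noncomputable def scone (f : A p) : ConvexCone ℝ (A p) where
  carrier := {g | ∃ m : A p, ∃ t : ℝ, InM m ∧ 0 ≤ t ∧ g = m - t • f}
  smul_mem' := by
    rintro c hc g ⟨m, t, hm, ht, rfl⟩
    refine ⟨c • m, c * t, ?_, by positivity, by rw [smul_sub, smul_smul]⟩
    rw [smul_eq_C_mul]
    exact inM_smul hc.le hm
  add_mem' := by
    rintro g ⟨m, t, hm, ht, rfl⟩ g' ⟨m', t', hm', ht', rfl⟩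
    exact ⟨m + m', t + t', inM_add hm hm', by positivity, by rw [add_smul]; abel⟩

lemma one_ne_zero_A : (1 : A p) ≠ 0 := one_ne_zero

lemma exists_L (f : A p) (hf : ¬ InM f) :
    ∃ L : A p →ₗ[ℝ] ℝ, L 1 = 1 ∧ (∀ a, InM a → 0 ≤ L a) ∧ L f ≤ 0 := by
  have H : ∀ c : ℝ, c • (1 : A p) = 0 → c • (1:ℝ) = 0 := by
    intro c hc
    rw [smul_eq_C_mul, mul_one] at hc
    have : c = 0 := by
      by_contra h
      exact (C_ne_zero.2 h) hc
    simp [this]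
  set F := LinearPMap.mkSpanSingleton' (σ := RingHom.id ℝ) (1 : A p) (1:ℝ) H with hF
  have hdom : F.domain = Submodule.span ℝ {(1 : A p)} :=
    LinearPMap.domain_mkSpanSingleton _ _ _
  have nonneg : ∀ x : F.domain, (x : A p) ∈ scone f → 0 ≤ F x := by
    rintro ⟨x, hx⟩ hxs
    have hx' := hx
    rw [hdom, Submodule.mem_span_singleton] at hx'
    obtain ⟨c, hc_eq⟩ := hx'
    subst hc_eq
    have hFx : F ⟨c • (1:A p), hx⟩ = c • (1:ℝ) := LinearPMap.mkSpanSingleton'_apply _ _ H c hx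
    rw [hFx]
    obtain ⟨m, t, hm, ht, hg⟩ := hxs
    have hg' : (C c : A p) = m - t • f := by
      rw [show (C c : A p) = c • (1:A p) by rw [smul_eq_C_mul, mul_one]]
      exact hg
    -- c • 1 = m - t • f
    by_contra hneg
    push_neg at hneg
    have hc : c < 0 := by simpa using hneg
    rcases eq_or_lt_of_le ht with ht0 | htpos
    · -- t = 0 : m = C c, eval at center gives c ≥ 0
      have hm' : m = C c := by
        rw [← ht0, zero_smul, sub_zero] at hg'
        exact hg'.symm
      have := inM_eval_nonneg (hm' ▸ hm) (ρ := fun _ => (1:ℝ)/2) (fun j => by norm_num)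
      rw [eval_C] at this
      linarith
    · -- t > 0 : f = t⁻¹ • (m - C c) ∈ M
      apply hf
      have hfeq : f = C t⁻¹ * (m + C (-c)) := by
        have h2 : C t * f = m + C (-c) := by
          rw [smul_eq_C_mul] at hg'
          rw [map_neg, ← sub_eq_add_neg]
          rw [eq_sub_iff_add_eq] at hg' ⊢
          rw [← hg']
          ring
        rw [← h2, ← mul_assoc, ← C_mul, inv_mul_cancel₀ (ne_of_gt htpos), C_1, one_mul]
      rw [hfeq]
      exact inM_smul (by positivity) (inM_add hm (inM_const (by linarith)))
  have dense : ∀ y, ∃ x : F.domain, (x : A p) + y ∈ scone f := by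
    intro y
    obtain ⟨N, hN⟩ := arch (-y)
    have hmem : (N • (1:A p)) ∈ F.domain := by
      rw [hdom]
      exact Submodule.smul_mem _ _ (Submodule.mem_span_singleton_self _)
    refine ⟨⟨N • (1:A p), hmem⟩, ⟨C N + y, 0, ?_, le_rfl, ?_⟩⟩
    · rw [sub_neg_eq_add] at hN
      exact hN
    · show N • (1:A p) + y = (C N + y) - (0:ℝ) • f
      rw [zero_smul, sub_zero, smul_eq_C_mul, mul_one]
  obtain ⟨L, hL1, hL2⟩ := riesz_extension ((scone f).toPointedCone ⟨0, 0, inM_sos sos_zero, le_rfl, by rw [zero_smul, sub_zero]⟩) F nonneg dense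
  refine ⟨L, ?_, ?_, ?_⟩
  · have h1 : (1 : A p) ∈ F.domain := by
      rw [hdom]; exact Submodule.mem_span_singleton_self _
    have := hL1 ⟨1, h1⟩
    rw [LinearPMap.mkSpanSingleton'_apply_self] at this
    simpa using this
  · intro a ha
    exact hL2 a ⟨a, 0, ha, le_rfl, by rw [zero_smul, sub_zero]⟩
  · have : -f ∈ scone f := ⟨0, 1, inM_sos sos_zero, zero_le_one, by rw [one_smul, zero_sub]⟩
    have := hL2 _ this
    rw [map_neg] at this
    linarith

end Putinar

namespace Putinar

variable {p : ℕ}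

/-- `a` is positive semidefinite for the localization of `L` -/
def PSD (L : A p →ₗ[ℝ] ℝ) (a : A p) : Prop := ∀ q : A p, 0 ≤ L (a * q ^ 2)

variable {L : A p →ₗ[ℝ] ℝ}

lemma psd_of_inM (hL : ∀ a, InM a → 0 ≤ L a) {a : A p} (ha : InM a) : PSD L a := by
  intro q
  have h := inM_mul_sos ha (sos_sq q)
  rw [mul_comm] at h
  exact hL _ h

lemma psd_one (hL : ∀ a, InM a → 0 ≤ L a) : PSD L (1 : A p) :=
  psd_of_inM hL (inM_sos sos_one)

lemma psd_smul {a : A p} {r : ℝ} (hr : 0 ≤ r) (ha : PSD L a) : PSD L (C r * a) := by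
  intro q
  rw [mul_assoc, ← smul_eq_C_mul, map_smul]
  exact mul_nonneg hr (ha q)

/-- Cauchy–Schwarz for the form `(u,v) ↦ L (a * u * v)` -/
lemma psd_cs {a : A p} (ha : PSD L a) (u v : A p) :
    L (a * (u * v)) ^ 2 ≤ L (a * u ^ 2) * L (a * v ^ 2) := by
  have key : ∀ x : ℝ, 0 ≤ L (a * v ^ 2) * (x * x) + (2 * L (a * (u * v))) * x + L (a * u ^ 2) := by
    intro x
    have e : a * (u + C x * v) ^ 2
        = (x * x) • (a * v ^ 2) + (2 * x) • (a * (u * v)) + a * u ^ 2 := by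
      simp only [smul_eq_C_mul, C_mul, C_pow, map_ofNat]
      ring
    have h := ha (u + C x * v)
    rw [e, map_add, map_add, map_smul, map_smul] at h
    simp only [smul_eq_mul] at h
    nlinarith [h]
  have hd := discrim_le_zero (a := L (a * v ^ 2)) (b := 2 * L (a * (u * v)))
    (c := L (a * u ^ 2)) key
  rw [discrim] at hd
  nlinarith [hd]

set_option maxHeartbeats 1000000 in
/-- product of two commuting PSD elements is PSD (one of them bounded) -/
theorem psd_mul_of_bdd (hL : ∀ a, InM a → 0 ≤ L a) {a b : A p} (ha : PSD L a) (hb : PSD L b)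
    {lam : ℝ} (hlam : 0 < lam) (hbd : PSD L (C lam - a)) : PSD L (a * b) := by
  intro q
  set u : A p := C lam⁻¹ * a with hu
  have hau : a = C lam * u := by
    rw [hu, ← mul_assoc, ← C_mul, mul_inv_cancel₀ hlam.ne', C_1, one_mul]
  have hPu : PSD L u := psd_smul (by positivity) ha
  have hP1u : PSD L (1 - u) := by
    have e : (1 - u : A p) = C lam⁻¹ * (C lam - a) := by
      rw [hu, mul_sub, ← C_mul, inv_mul_cancel₀ hlam.ne', C_1]
    rw [e]
    exact psd_smul (by positivity) hbd
  -- the iteration  s 0 = u,  s (n+1) = s n - (s n)^2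
  let s : ℕ → A p := fun n => Nat.rec u (fun _ x => x - x ^ 2) n
  have hsS : ∀ n, s (n + 1) = s n - (s n) ^ 2 := fun n => rfl
  have hinv : ∀ n, PSD L (s n) ∧ PSD L (1 - s n) := by
    intro n
    induction n with
    | zero => exact ⟨hPu, hP1u⟩
    | succ n ih =>
      constructor
      · intro q'
        have e : (s n - (s n) ^ 2) * q' ^ 2
            = (1 - s n) * (s n * q') ^ 2 + (s n) * ((1 - s n) * q') ^ 2 := by ring
        rw [hsS, e, map_add]
        exact add_nonneg (ih.2 _) (ih.1 _)
      · intro q'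
        have e : (1 - (s n - (s n) ^ 2)) * q' ^ 2
            = (1 - s n) * q' ^ 2 + 1 * (s n * q') ^ 2 := by ring
        rw [hsS, e, map_add]
        exact add_nonneg (ih.2 _) (psd_one hL _)
  have tele : ∀ n, u = (∑ k ∈ Finset.range n, (s k) ^ 2) + s n := by
    intro n
    induction n with
    | zero => simp [s]
    | succ n ih =>
      rw [Finset.sum_range_succ, hsS n]
      linear_combination ih
  -- series of terms for fixed q
  set t : ℕ → ℝ := fun k => L (1 * (s k * q) ^ 2) with hT
  have ht_nonneg : ∀ k, 0 ≤ t k := fun k => psd_one hL _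
  have hsum : ∀ n, (∑ k ∈ Finset.range n, t k) ≤ L (u * q ^ 2) := by
    intro n
    have e : u * q ^ 2 = (∑ k ∈ Finset.range n, 1 * (s k * q) ^ 2) + s n * q ^ 2 := by
      calc u * q ^ 2 = ((∑ k ∈ Finset.range n, (s k) ^ 2) + s n) * q ^ 2 := by rw [← tele n]
        _ = (∑ k ∈ Finset.range n, 1 * (s k * q) ^ 2) + s n * q ^ 2 := by
            rw [add_mul, Finset.sum_mul]
            congr 1
            exact Finset.sum_congr rfl fun k _ => by ring
    rw [e, map_add, map_sum]
    have := (hinv n).1 q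
    simp only [hT]
    linarith [this]
  have hsmall : ∀ δ : ℝ, 0 < δ → ∃ n, t n < δ := by
    intro δ hδ
    by_contra hcon
    push_neg at hcon
    obtain ⟨n, hn⟩ := exists_nat_gt (L (u * q ^ 2) / δ)
    have h1 : (n : ℝ) * δ ≤ ∑ k ∈ Finset.range n, t k := by
      calc (n : ℝ) * δ = ∑ _k ∈ Finset.range n, δ := by
            rw [Finset.sum_const, Finset.card_range, nsmul_eq_mul]
        _ ≤ ∑ k ∈ Finset.range n, t k := Finset.sum_le_sum fun k _ => hcon k
    have h2 := hsum n
    have : (n : ℝ) * δ ≤ L (u * q ^ 2) := le_trans h1 h2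
    rw [div_lt_iff₀ hδ] at hn
    linarith
  -- main decomposition
  have main : ∀ n, (L (u * (b * q ^ 2)) : ℝ)
      = (∑ k ∈ Finset.range n, L (b * (s k * q) ^ 2)) + L (s n * (b * q ^ 2)) := by
    intro n
    have e : u * (b * q ^ 2)
        = (∑ k ∈ Finset.range n, b * (s k * q) ^ 2) + s n * (b * q ^ 2) := by
      calc u * (b * q ^ 2) = ((∑ k ∈ Finset.range n, (s k) ^ 2) + s n) * (b * q ^ 2) := by
            rw [← tele n]
        _ = _ := by
            rw [add_mul, Finset.sum_mul]
            congr 1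
            exact Finset.sum_congr rfl fun k _ => by ring
    rw [e, map_add, map_sum]
  have hlower : ∀ n, L (s n * (b * q ^ 2)) ≤ L (u * (b * q ^ 2)) := by
    intro n
    rw [main n]
    have : 0 ≤ ∑ k ∈ Finset.range n, L (b * (s k * q) ^ 2) :=
      Finset.sum_nonneg fun k _ => hb _
    linarith
  -- now show L (u * (b*q^2)) ≥ -ε for every ε > 0
  have key : ∀ ε : ℝ, 0 < ε → -ε ≤ L (u * (b * q ^ 2)) := by
    intro ε hε
    set B : ℝ := L (1 * (b * q) ^ 2) with hB
    have hBnn : 0 ≤ B := psd_one hL _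
    set Q : ℝ := L (1 * q ^ 2) with hQ
    have hQnn : 0 ≤ Q := psd_one hL _
    obtain ⟨n, hn⟩ := hsmall (ε ^ 4 / ((B + 1) ^ 2 * (Q + 1))) (by positivity)
    -- r = L (s n * (b * q^2))
    set r : ℝ := L (s n * (b * q ^ 2)) with hr
    -- CS with form s n :  r^2 ≤ L(s n * (b*q)^2) * L(s n * q^2)
    have cs1 : r ^ 2 ≤ L (s n * (b * q) ^ 2) * L (s n * q ^ 2) := by
      have := psd_cs (hinv n).1 (b * q) q
      have e : (s n) * (b * q * q) = s n * (b * q ^ 2) := by ring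
      rw [e] at this
      exact this
    have h1 : L (s n * (b * q) ^ 2) ≤ B := by
      have h := (hinv n).2 (b * q)
      have e : (1 - s n) * (b * q) ^ 2 = 1 * (b * q) ^ 2 - s n * (b * q) ^ 2 := by ring
      rw [e, map_sub] at h
      linarith
    have h2 : (L (s n * q ^ 2)) ^ 2 ≤ t n * Q := by
      have := psd_cs (psd_one hL) (s n * q) q
      have e1 : (1 : A p) * (s n * q * q) = s n * q ^ 2 := by ring
      rw [e1] at this
      exact this
    have h3 : 0 ≤ L (s n * q ^ 2) := (hinv n).1 q
    have h4 : 0 ≤ L (s n * (b * q) ^ 2) := (hinv n).1 (b * q)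
    -- combine
    have htn : 0 ≤ t n := ht_nonneg n
    have e2 : t n * Q ≤ ε ^ 4 / (B + 1) ^ 2 := by
      have e : (ε ^ 4 / ((B + 1) ^ 2 * (Q + 1))) * (Q + 1) = ε ^ 4 / (B + 1) ^ 2 := by
        field_simp
      rw [← e]
      nlinarith [hn, hQnn, htn]
    have h5 : (L (s n * q ^ 2)) ^ 2 ≤ ε ^ 4 / (B + 1) ^ 2 := le_trans h2 e2
    have h6 : L (s n * q ^ 2) ≤ ε ^ 2 / (B + 1) := by
      have hq2 : (ε ^ 2 / (B + 1)) ^ 2 = ε ^ 4 / (B + 1) ^ 2 := by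
        rw [div_pow]; ring_nf
      refine le_of_pow_le_pow_left₀ two_ne_zero (by positivity) ?_
      rw [hq2]
      exact h5
    have h7 : r ^ 2 ≤ ε ^ 2 := by
      have : r ^ 2 ≤ B * (ε ^ 2 / (B + 1)) := by
        calc r ^ 2 ≤ L (s n * (b * q) ^ 2) * L (s n * q ^ 2) := cs1
          _ ≤ B * (ε ^ 2 / (B + 1)) := by
              apply mul_le_mul h1 h6 h3 hBnn
      have hfrac : B * (ε ^ 2 / (B + 1)) ≤ ε ^ 2 := by
        rw [mul_div_assoc']
        rw [div_le_iff₀ (by linarith)]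
        nlinarith [sq_nonneg ε]
      linarith
    have h8 : -ε ≤ r := by
      have habs : |r| ≤ ε := by
        refine le_of_pow_le_pow_left₀ two_ne_zero hε.le ?_
        rw [sq_abs]
        exact h7
      linarith [neg_abs_le r]
    linarith [hlower n]
  have h0 : 0 ≤ L (u * (b * q ^ 2)) := by
    by_contra hneg
    push_neg at hneg
    have := key (-(L (u * (b * q ^ 2))) / 2) (by linarith)
    linarith
  have efin : a * b * q ^ 2 = lam • (u * (b * q ^ 2)) := by
    rw [smul_eq_C_mul, hau]; ring
  rw [efin, map_smul]
  exact mul_nonneg hlam.le h0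

/-- products of the generators are PSD -/
lemma psd_prod (hL : ∀ a, InM a → 0 ≤ L a) (S : Finset (Fin p)) :
    PSD L (∏ j ∈ S, cU j) := by
  induction S using Finset.induction with
  | empty => simpa using psd_one hL
  | @insert j S hj ih =>
    rw [Finset.prod_insert hj]
    obtain ⟨N, hN⟩ := arch (∏ j ∈ S, cU j)
    have hN' : InM (C (max N 1) - ∏ j ∈ S, cU j) := bdd_mono (le_max_left _ _) hN
    have h := psd_mul_of_bdd hL ih (psd_of_inM hL (inM_gen j))
      (lt_of_lt_of_le one_pos (le_max_right N 1)) (psd_of_inM hL hN')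
    intro q
    have e : (cU j * ∏ x ∈ S, cU x) * q ^ 2 = ((∏ j ∈ S, cU j) * cU j) * q ^ 2 := by ring
    rw [e]
    exact h q

lemma L_sq_prod_nonneg (hL : ∀ a, InM a → 0 ≤ L a) (g : A p) (S : Finset (Fin p)) :
    0 ≤ L (g ^ 2 * ∏ j ∈ S, cU j) := by
  have := psd_prod hL S g
  rwa [mul_comm] at this

end Putinar

namespace Putinar

/-- product difference bound for factors in `[0,1]` -/
lemma prod_diff_le {ι : Type*} [DecidableEq ι] (s : Finset ι) (x y : ι → ℝ)
    (hx : ∀ i ∈ s, 0 ≤ x i ∧ x i ≤ 1) (hy : ∀ i ∈ s, 0 ≤ y i ∧ y i ≤ 1) :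
    |(∏ i ∈ s, x i) - ∏ i ∈ s, y i| ≤ ∑ i ∈ s, |x i - y i| := by
  induction s using Finset.induction with
  | empty => simp
  | @insert a s ha ih =>
    rw [Finset.prod_insert ha, Finset.prod_insert ha, Finset.sum_insert ha]
    have hxa := hx a (Finset.mem_insert_self a s)
    have hya := hy a (Finset.mem_insert_self a s)
    have hx' : ∀ i ∈ s, 0 ≤ x i ∧ x i ≤ 1 := fun i hi => hx i (Finset.mem_insert_of_mem hi)
    have hy' : ∀ i ∈ s, 0 ≤ y i ∧ y i ≤ 1 := fun i hi => hy i (Finset.mem_insert_of_mem hi)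
    have ihs := ih hx' hy'
    have hpx : 0 ≤ ∏ i ∈ s, x i := Finset.prod_nonneg fun i hi => (hx' i hi).1
    have hpy : 0 ≤ ∏ i ∈ s, y i := Finset.prod_nonneg fun i hi => (hy' i hi).1
    have hpy1 : (∏ i ∈ s, y i) ≤ 1 := Finset.prod_le_one (fun i hi => (hy' i hi).1) (fun i hi => (hy' i hi).2)
    calc |x a * ∏ i ∈ s, x i - y a * ∏ i ∈ s, y i|
        = |x a * ((∏ i ∈ s, x i) - ∏ i ∈ s, y i) + (x a - y a) * ∏ i ∈ s, y i| := by ring_nf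
      _ ≤ |x a * ((∏ i ∈ s, x i) - ∏ i ∈ s, y i)| + |(x a - y a) * ∏ i ∈ s, y i| := abs_add_le _ _
      _ = |x a| * |(∏ i ∈ s, x i) - ∏ i ∈ s, y i| + |x a - y a| * |∏ i ∈ s, y i| := by
          rw [abs_mul, abs_mul]
      _ ≤ 1 * (∑ i ∈ s, |x i - y i|) + |x a - y a| * 1 := by
          have g1 : |x a| * |(∏ i ∈ s, x i) - ∏ i ∈ s, y i| ≤ 1 * (∑ i ∈ s, |x i - y i|) :=
            mul_le_mul (by rw [abs_of_nonneg hxa.1]; exact hxa.2) ihs (abs_nonneg _) zero_le_one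
          have g2 : |x a - y a| * |∏ i ∈ s, y i| ≤ |x a - y a| * 1 :=
            mul_le_mul_of_nonneg_left (by rw [abs_of_nonneg hpy]; exact hpy1) (abs_nonneg _)
          linarith
      _ = |x a - y a| + ∑ i ∈ s, |x i - y i| := by ring

/-- binomial ratio as a product -/
lemma choose_ratio (n i k : ℕ) (hk : k ≤ i) (hin : i ≤ n) (hkn : k < n) :
    (((n - k).choose (i - k) : ℝ)) = (n.choose i : ℝ) * ∏ t ∈ Finset.range k, (((i : ℝ) - t) / ((n : ℝ) - t)) := by
  induction k with
  | zero => simp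
  | succ k ih =>
    have hk' : k ≤ i := Nat.le_of_succ_le hk
    have hkn' : k < n := Nat.lt_of_succ_lt hkn
    have ihv := ih hk' hkn'
    -- (n-k) * C(n-k-1, i-k-1) = C(n-k, i-k) * (i-k)
    have key : (n - k) * ((n - k - 1).choose (i - k - 1)) = (n - k).choose (i - k) * (i - k) := by
      have h1 : n - k - 1 + 1 = n - k := by omega
      have h2 : i - k - 1 + 1 = i - k := by omega
      have := Nat.add_one_mul_choose_eq (n - k - 1) (i - k - 1)
      rw [h1, h2] at this
      exact this
    have hc : ((n - (k+1)).choose (i - (k+1)) : ℝ)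
        = ((n - k).choose (i - k) : ℝ) * (((i:ℝ) - k) / ((n:ℝ) - k)) := by
      have hnk : (0:ℝ) < (n:ℝ) - k := by
        have : (k:ℝ) < n := by exact_mod_cast hkn'
        linarith
      have e1 : n - (k+1) = n - k - 1 := by omega
      have e2 : i - (k+1) = i - k - 1 := by omega
      rw [e1, e2]
      have keyr : ((n:ℝ) - k) * ((n - k - 1).choose (i - k - 1) : ℝ)
          = ((n - k).choose (i - k) : ℝ) * ((i:ℝ) - k) := by
        have := congrArg (fun z : ℕ => (z : ℝ)) key
        push_cast at this
        rw [Nat.cast_sub hkn'.le] at this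
        rw [Nat.cast_sub hk'] at this
        push_cast at this
        linarith [this]
      field_simp
      linarith [keyr]
    rw [Finset.prod_range_succ, hc, ihv]
    ring

/-- the normalized coefficient -/
noncomputable def uu (n k i : ℕ) : ℝ :=
  if k ≤ i then ((n - k).choose (i - k) : ℝ) / ((n.choose i : ℕ) : ℝ) else 0

lemma uu_mul_choose (n k i : ℕ) (hi : i ≤ n) :
    (if k ≤ i then ((n - k).choose (i - k) : ℝ) else 0) = uu n k i * (n.choose i : ℝ) := by
  have hpos : (0:ℝ) < (n.choose i : ℝ) := by
    exact_mod_cast Nat.choose_pos hi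
  unfold uu
  by_cases h : k ≤ i
  · rw [if_pos h, if_pos h, div_mul_cancel₀ _ hpos.ne']
  · rw [if_neg h, if_neg h, zero_mul]

lemma uu_props (n k i d : ℕ) (hkd : k ≤ d) (hi : i ≤ n) (hd1 : 1 ≤ d) (hnd : 2*d ≤ n) :
    0 ≤ uu n k i ∧ uu n k i ≤ 1 ∧
      |uu n k i - ((i:ℝ)/(n:ℝ))^k| ≤ (d:ℝ)^2 / ((n:ℝ) - d) := by
  have hdn : (d:ℝ) < (n:ℝ) := by
    have : d < n := by omega
    exact_mod_cast this
  have hnd0 : (0:ℝ) < (n:ℝ) - d := by linarith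
  have hn0 : (0:ℝ) < (n:ℝ) := by
    have : 0 < n := by omega
    exact_mod_cast this
  have hin : (i:ℝ) ≤ (n:ℝ) := by exact_mod_cast hi
  have hi0 : (0:ℝ) ≤ (i:ℝ) := by positivity
  by_cases hki : k ≤ i
  · -- main case
    have hkn : k < n := by omega
    have hratio : uu n k i = ∏ t ∈ Finset.range k, (((i : ℝ) - t) / ((n : ℝ) - t)) := by
      unfold uu
      rw [if_pos hki, choose_ratio n i k hki hi hkn]
      have hpos : (0:ℝ) < (n.choose i : ℝ) := by exact_mod_cast Nat.choose_pos hi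
      rw [mul_comm, mul_div_assoc, div_self hpos.ne', mul_one]
    -- factor properties
    have hfac : ∀ t ∈ Finset.range k,
        (0 ≤ ((i:ℝ) - t)/((n:ℝ) - t) ∧ ((i:ℝ) - t)/((n:ℝ) - t) ≤ 1) ∧
        |((i:ℝ) - t)/((n:ℝ) - t) - (i:ℝ)/(n:ℝ)| ≤ (d:ℝ)/((n:ℝ) - d) := by
      intro t ht
      rw [Finset.mem_range] at ht
      have htd : (t:ℝ) < d := by
        have : t < d := by omega
        exact_mod_cast this
      have hti : (t:ℝ) ≤ (i:ℝ) := by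
        have : t ≤ i := by omega
        exact_mod_cast this
      have hnt : (0:ℝ) < (n:ℝ) - t := by linarith
      have ht0 : (0:ℝ) ≤ (t:ℝ) := by positivity
      refine ⟨⟨div_nonneg (by linarith) hnt.le, ?_⟩, ?_⟩
      · rw [div_le_one hnt]; linarith
      · have e : ((i:ℝ) - t)/((n:ℝ) - t) - (i:ℝ)/(n:ℝ)
            = -((t:ℝ) * ((n:ℝ) - i)) / (((n:ℝ) - t) * (n:ℝ)) := by
          field_simp
          ring
        rw [e, abs_div, abs_neg]
        rw [abs_of_nonneg (mul_nonneg ht0 (by linarith) : (0:ℝ) ≤ (t:ℝ) * ((n:ℝ) - i))]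
        rw [abs_of_pos (mul_pos hnt hn0 : (0:ℝ) < ((n:ℝ) - t) * (n:ℝ))]
        have s1 : (t:ℝ) * ((n:ℝ) - i) / (((n:ℝ) - t) * (n:ℝ)) ≤ (t:ℝ)/((n:ℝ) - t) := by
          rw [div_le_div_iff₀ (mul_pos hnt hn0) hnt]
          nlinarith [mul_nonneg (mul_nonneg ht0 hnt.le) hi0]
        have s2 : (t:ℝ)/((n:ℝ) - t) ≤ (d:ℝ)/((n:ℝ) - d) := by
          rw [div_le_div_iff₀ hnt hnd0]
          nlinarith [mul_le_mul_of_nonneg_right htd.le hn0.le]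
        linarith
    constructor
    · rw [hratio]; exact Finset.prod_nonneg fun t ht => (hfac t ht).1.1
    constructor
    · rw [hratio]
      exact Finset.prod_le_one (fun t ht => (hfac t ht).1.1) (fun t ht => (hfac t ht).1.2)
    · rw [hratio]
      have hv : ((i:ℝ)/(n:ℝ))^k = ∏ t ∈ Finset.range k, ((i:ℝ)/(n:ℝ)) := by
        rw [Finset.prod_const, Finset.card_range]
      rw [hv]
      have hme : (0 ≤ (i:ℝ)/(n:ℝ) ∧ (i:ℝ)/(n:ℝ) ≤ 1) := by
        constructor
        · positivity
        · rw [div_le_one hn0]; exact hin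
      calc |(∏ t ∈ Finset.range k, (((i : ℝ) - t) / ((n : ℝ) - t))) - ∏ t ∈ Finset.range k, ((i:ℝ)/(n:ℝ))|
          ≤ ∑ t ∈ Finset.range k, |((i:ℝ) - t)/((n:ℝ) - t) - (i:ℝ)/(n:ℝ)| :=
            prod_diff_le _ _ _ (fun t ht => (hfac t ht).1) (fun t ht => hme)
        _ ≤ ∑ t ∈ Finset.range k, (d:ℝ)/((n:ℝ) - d) :=
            Finset.sum_le_sum fun t ht => (hfac t ht).2
        _ = (k:ℝ) * ((d:ℝ)/((n:ℝ) - d)) := by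
            rw [Finset.sum_const, Finset.card_range, nsmul_eq_mul]
        _ ≤ (d:ℝ)^2/((n:ℝ) - d) := by
            have hkdr : (k:ℝ) ≤ (d:ℝ) := by exact_mod_cast hkd
            have hk0 : (0:ℝ) ≤ (k:ℝ) := by positivity
            have e : (k:ℝ) * ((d:ℝ)/((n:ℝ) - d)) = ((k:ℝ)*(d:ℝ))/((n:ℝ) - d) := by ring
            rw [e, div_le_div_iff₀ hnd0 hnd0]
            have hd0 : (0:ℝ) ≤ (d:ℝ) := by positivity
            nlinarith [mul_le_mul_of_nonneg_right hkdr hd0]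
  · -- k > i : uu = 0
    have hik : i < k := Nat.lt_of_not_le hki
    have hk1 : 1 ≤ k := by omega
    unfold uu
    rw [if_neg hki]
    refine ⟨le_rfl, zero_le_one, ?_⟩
    rw [zero_sub, abs_neg]
    have hv0 : 0 ≤ ((i:ℝ)/(n:ℝ))^k := by positivity
    rw [abs_of_nonneg hv0]
    have hiLd : (i:ℝ) ≤ (d:ℝ) - 1 := by
      have : i ≤ d - 1 := by omega
      have hcast : ((d:ℕ) - 1 : ℕ) = d - 1 := rfl
      have : (i:ℝ) ≤ ((d - 1 : ℕ) : ℝ) := by exact_mod_cast this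
      rwa [Nat.cast_sub hd1, Nat.cast_one] at this
    have hstep : ((i:ℝ)/(n:ℝ))^k ≤ (i:ℝ)/(n:ℝ) := by
      have h01 : 0 ≤ (i:ℝ)/(n:ℝ) := by positivity
      have h11 : (i:ℝ)/(n:ℝ) ≤ 1 := by rw [div_le_one hn0]; exact hin
      exact pow_le_of_le_one h01 h11 (by omega)
    have hfin : (i:ℝ)/(n:ℝ) ≤ (d:ℝ)^2/((n:ℝ) - d) := by
      rw [div_le_div_iff₀ hn0 hnd0]
      have hd' : (1:ℝ) ≤ (d:ℝ) := by exact_mod_cast hd1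
      have hh1 : (i:ℝ) * ((n:ℝ) - d) ≤ (i:ℝ) * (n:ℝ) := by nlinarith
      have hh2 : (i:ℝ) * (n:ℝ) ≤ ((d:ℝ) - 1) * (n:ℝ) := mul_le_mul_of_nonneg_right hiLd hn0.le
      have hh3 : ((d:ℝ) - 1) * (n:ℝ) ≤ (d:ℝ)^2 * (n:ℝ) := by nlinarith [sq_nonneg ((d:ℝ) - 1)]
      linarith
    linarith
end Putinar

namespace Putinar

variable {p : ℕ}

/-- Bernstein basis element (unnormalized) -/
noncomputable def bb (n : ℕ) (α : Fin p → ℕ) : A p :=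
  ∏ j, (X j ^ (α j) * (1 - X j) ^ (n - α j))

/-- Bernstein coefficient -/
noncomputable def lam (h : A p) (n : ℕ) (α : Fin p → ℕ) : ℝ :=
  ∑ κ ∈ h.support, coeff κ h *
    ∏ j, (if (κ j) ≤ α j then (((n - κ j).choose (α j - κ j) : ℕ) : ℝ) else 0)

lemma X_pow_expand (j : Fin p) (n k : ℕ) (hk : k ≤ n) :
    (X j : A p) ^ k
      = ∑ i ∈ Finset.range (n+1),
          C (if k ≤ i then (((n - k).choose (i - k) : ℕ) : ℝ) else 0)
            * (X j ^ i * (1 - X j) ^ (n - i)) := by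
  have base : (X j : A p) ^ k = X j ^ k * (X j + (1 - X j)) ^ (n - k) := by
    rw [show (X j : A p) + (1 - X j) = 1 by ring, one_pow, mul_one]
  rw [base, add_pow, Finset.mul_sum]
  -- RHS: restrict to Ico k (n+1)
  rw [show (Finset.range (n+1)) = Finset.Ico 0 (n+1) by rw [Finset.range_eq_Ico]]
  rw [← Finset.sum_subset (Finset.Ico_subset_Ico (Nat.zero_le k) le_rfl :
        Finset.Ico k (n+1) ⊆ Finset.Ico 0 (n+1))]
  · rw [Finset.sum_Ico_eq_sum_range]
    have hlen : n + 1 - k = (n - k) + 1 := by omega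
    rw [hlen]
    refine Finset.sum_congr rfl fun s hs => ?_
    rw [Finset.mem_range] at hs
    have h1 : k ≤ k + s := Nat.le_add_right k s
    have h2 : k + s - k = s := by omega
    have h3 : n - (k + s) = n - k - s := by omega
    rw [if_pos h1, h2, h3]
    have hC : (C ((((n - k).choose s : ℕ) : ℝ)) : A p) = (((n - k).choose s : ℕ) : A p) := by
      rw [map_natCast]
    rw [hC]
    rw [pow_add]
    ring
  · intro i hi hni
    have : ¬ k ≤ i := by
      simp only [Finset.mem_Ico] at hi hni
      omega
    rw [if_neg this, map_zero, zero_mul]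

theorem bern_identity (h : A p) (n : ℕ) (hdeg : ∀ κ ∈ h.support, ∀ j, κ j ≤ n) :
    h = ∑ α ∈ Fintype.piFinset (fun _ : Fin p => Finset.range (n+1)),
          C (lam h n α) * bb n α := by
  have step1 : ∀ κ ∈ h.support, (monomial κ (coeff κ h) : A p) =
      ∑ α ∈ Fintype.piFinset (fun _ : Fin p => Finset.range (n+1)),
        C (coeff κ h * ∏ j, (if (κ j) ≤ α j
            then (((n - κ j).choose (α j - κ j) : ℕ) : ℝ) else 0)) * bb n α := by
    intro κ hκ
    have e1 : (monomial κ (coeff κ h) : A p) = C (coeff κ h) * ∏ j, X j ^ (κ j) := by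
      rw [monomial_eq]
      congr 1
      exact Finsupp.prod_fintype _ _ (fun j => pow_zero _)
    rw [e1]
    have e2 : (∏ j, (X j : A p) ^ (κ j)) =
        ∏ j, ∑ i ∈ Finset.range (n+1),
          C (if (κ j) ≤ i then (((n - κ j).choose (i - κ j) : ℕ) : ℝ) else 0)
            * (X j ^ i * (1 - X j) ^ (n - i)) :=
      Finset.prod_congr rfl fun j _ => X_pow_expand j n (κ j) (hdeg κ hκ j)
    rw [e2, Finset.prod_univ_sum]
    rw [Finset.mul_sum]
    refine Finset.sum_congr rfl fun α hα => ?_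
    rw [Finset.prod_mul_distrib]
    have ecp : (∏ x : Fin p, (C (if (κ x) ≤ α x
        then (((n - κ x).choose (α x - κ x) : ℕ) : ℝ) else 0) : A p))
        = C (∏ x, (if (κ x) ≤ α x then (((n - κ x).choose (α x - κ x) : ℕ) : ℝ) else 0)) :=
      (map_prod (C : ℝ →+* A p) _ Finset.univ).symm
    rw [ecp, C_mul]
    unfold bb
    ring
  conv_lhs => rw [← support_sum_monomial_coeff h, Finset.sum_congr rfl step1]
  rw [Finset.sum_comm]
  refine Finset.sum_congr rfl fun α _ => ?_
  rw [← Finset.sum_mul, ← map_sum C]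
  rfl

lemma lam_nonneg (h : A p) (θ : ℝ)
    (hgrid : ∀ ρ : Fin p → ℝ, (∀ j, 0 ≤ ρ j ∧ ρ j ≤ 1) → θ ≤ eval ρ h)
    (n d : ℕ) (hd1 : 1 ≤ d) (hdbound : ∀ κ ∈ h.support, ∀ j, κ j ≤ d)
    (hnd : 2*d ≤ n)
    (herr : (∑ κ ∈ h.support, |coeff κ h|) * ((p : ℝ) * ((d:ℝ)^2 / ((n:ℝ) - d))) ≤ θ)
    (α : Fin p → ℕ) (hα : ∀ j, α j ≤ n) : 0 ≤ lam h n α := by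
  have hn0 : 0 < n := by omega
  have hnR : (0:ℝ) < (n:ℝ) := by exact_mod_cast hn0
  -- grid point
  set ρ : Fin p → ℝ := fun j => (α j : ℝ) / (n : ℝ) with hρ
  have hρbox : ∀ j, 0 ≤ ρ j ∧ ρ j ≤ 1 := by
    intro j
    constructor
    · positivity
    · rw [div_le_one hnR]
      exact_mod_cast hα j
  -- choose products
  set NN : ℝ := ∏ j, ((n.choose (α j) : ℕ) : ℝ) with hNN
  have hNNpos : 0 < NN := Finset.prod_pos fun j _ => by
    exact_mod_cast Nat.choose_pos (hα j)
  set e : ℝ := (d:ℝ)^2 / ((n:ℝ) - d) with he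
  have hepos : 0 ≤ e := by
    have : (0:ℝ) < (n:ℝ) - d := by
      have : d < n := by omega
      have := (Nat.cast_lt (α := ℝ)).2 this
      linarith
    positivity
  -- rewrite lam
  have hlam : lam h n α = (∑ κ ∈ h.support, coeff κ h * ∏ j, uu n (κ j) (α j)) * NN := by
    unfold lam
    rw [Finset.sum_mul]
    refine Finset.sum_congr rfl fun κ _ => ?_
    rw [mul_assoc]
    congr 1
    rw [hNN, ← Finset.prod_mul_distrib]
    exact Finset.prod_congr rfl fun j _ => uu_mul_choose n (κ j) (α j) (hα j)
  -- estimate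
  have hterm : ∀ κ ∈ h.support,
      coeff κ h * ∏ j, ((ρ j) ^ (κ j)) - |coeff κ h| * ((p:ℝ) * e)
        ≤ coeff κ h * ∏ j, uu n (κ j) (α j) := by
    intro κ hκ
    have hprops : ∀ j, (0 ≤ uu n (κ j) (α j) ∧ uu n (κ j) (α j) ≤ 1) ∧
        |uu n (κ j) (α j) - (ρ j)^(κ j)| ≤ e := by
      intro j
      have := uu_props n (κ j) (α j) d (hdbound κ hκ j) (hα j) hd1 hnd
      exact ⟨⟨this.1, this.2.1⟩, this.2.2⟩
    have hv : ∀ j, 0 ≤ (ρ j)^(κ j) ∧ (ρ j)^(κ j) ≤ 1 := by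
      intro j
      constructor
      · exact pow_nonneg (hρbox j).1 _
      · exact pow_le_one₀ (hρbox j).1 (hρbox j).2
    have hdiff : |(∏ j, uu n (κ j) (α j)) - ∏ j, (ρ j)^(κ j)| ≤ (p:ℝ) * e := by
      calc |(∏ j, uu n (κ j) (α j)) - ∏ j, (ρ j)^(κ j)|
          ≤ ∑ j, |uu n (κ j) (α j) - (ρ j)^(κ j)| :=
            prod_diff_le Finset.univ _ _ (fun j _ => (hprops j).1) (fun j _ => hv j)
        _ ≤ ∑ _j : Fin p, e := Finset.sum_le_sum fun j _ => (hprops j).2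
        _ = (p:ℝ) * e := by
            rw [Finset.sum_const, Finset.card_univ, Fintype.card_fin, nsmul_eq_mul]
    have habs : |coeff κ h * ((∏ j, uu n (κ j) (α j)) - ∏ j, (ρ j)^(κ j))|
        ≤ |coeff κ h| * ((p:ℝ) * e) := by
      rw [abs_mul]
      exact mul_le_mul_of_nonneg_left hdiff (abs_nonneg _)
    have := neg_abs_le (coeff κ h * ((∏ j, uu n (κ j) (α j)) - ∏ j, (ρ j)^(κ j)))
    nlinarith [this, habs]
  -- sum up
  have hsum : (∑ κ ∈ h.support, coeff κ h * ∏ j, (ρ j)^(κ j))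
      - (∑ κ ∈ h.support, |coeff κ h|) * ((p:ℝ) * e)
      ≤ ∑ κ ∈ h.support, coeff κ h * ∏ j, uu n (κ j) (α j) := by
    rw [Finset.sum_mul, ← Finset.sum_sub_distrib]
    exact Finset.sum_le_sum hterm
  have heval : (∑ κ ∈ h.support, coeff κ h * ∏ j, (ρ j)^(κ j)) = eval ρ h :=
    (eval_eq' ρ h).symm
  have hgr := hgrid ρ hρbox
  have hmain : 0 ≤ ∑ κ ∈ h.support, coeff κ h * ∏ j, uu n (κ j) (α j) := by
    rw [heval] at hsum
    rw [he] at hsum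
    linarith [hsum, hgr, herr]
  rw [hlam]
  exact mul_nonneg hmain hNNpos.le

lemma bb_decomp (n : ℕ) (hn : Even n) (α : Fin p → ℕ) (hα : ∀ j, α j ≤ n) :
    ∃ g : A p, bb n α
      = g ^ 2 * ∏ j ∈ Finset.univ.filter (fun j => ¬ Even (α j)), cU j := by
  obtain ⟨ee, hee⟩ := hn
  refine ⟨∏ j, (X j ^ (α j / 2) * (1 - X j) ^ ((n - α j) / 2)), ?_⟩
  rw [← Finset.prod_pow, Finset.prod_filter, ← Finset.prod_mul_distrib]
  unfold bb
  refine Finset.prod_congr rfl fun j _ => ?_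
  by_cases hev : Even (α j)
  · obtain ⟨c, hc⟩ := id hev
    have e1 : α j / 2 = c := by omega
    have e2 : (n - α j) / 2 = ee - c := by omega
    have e3 : n - α j = (ee - c) + (ee - c) := by
      have := hα j
      omega
    rw [if_neg (not_not_intro hev), e1, e2, e3, hc, mul_one]
    ring
  · have hodd : Odd (α j) := Nat.not_even_iff_odd.1 hev
    obtain ⟨c, hc⟩ := hodd
    have hlt : α j < n := by
      rcases Nat.lt_or_ge (α j) n with h | h
      · exact h
      · exfalso
        have : α j = n := le_antisymm (hα j) h
        rw [this] at hc
        omega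
    have e1 : α j / 2 = c := by omega
    have e2 : (n - α j) / 2 = ee - c - 1 := by omega
    have e3 : n - α j = 2*(ee - c - 1) + 1 := by omega
    rw [if_pos hev, e1, e2, e3, hc]
    unfold cU
    ring
end Putinar

namespace Putinar

variable {p : ℕ}

lemma continuous_eval (h : A p) : Continuous fun ρ : Fin p → ℝ => eval ρ h := by
  induction h using MvPolynomial.induction_on with
  | C a => simpa using continuous_const
  | add f g hf hg =>
      have : (fun ρ : Fin p → ℝ => eval ρ (f + g))
          = fun ρ => eval ρ f + eval ρ g := by
        funext ρ; rw [map_add]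
      rw [this]; exact hf.add hg
  | mul_X f j hf =>
      have : (fun ρ : Fin p → ℝ => eval ρ (f * X j))
          = fun ρ => eval ρ f * ρ j := by
        funext ρ; rw [map_mul, eval_X]
      rw [this]; exact hf.mul (continuous_apply j)

/-- Main analytic step: strictly positive polynomials have positive value
under any normalized functional nonnegative on the module. -/
theorem bern_main (h : A p) (hpos : ∀ ρ : Fin p → ℝ, (∀ j, 0 ≤ ρ j ∧ ρ j ≤ 1) → 0 < eval ρ h) :
    ∃ θ : ℝ, 0 < θ ∧ ∀ L : A p →ₗ[ℝ] ℝ, (∀ a, InM a → 0 ≤ L a) → L 1 = 1 → θ ≤ L h := by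
  classical
  -- minimum over the box
  set U : Set (Fin p → ℝ) := Set.pi Set.univ (fun _ : Fin p => Set.Icc (0:ℝ) 1) with hU
  have memU : ∀ ρ : Fin p → ℝ, ρ ∈ U ↔ (∀ j, 0 ≤ ρ j ∧ ρ j ≤ 1) := by
    intro ρ
    constructor
    · intro hm j
      have := hm j (Set.mem_univ j)
      exact ⟨this.1, this.2⟩
    · intro hm j _
      exact ⟨(hm j).1, (hm j).2⟩
  have hUc : IsCompact U := isCompact_univ_pi fun _ => isCompact_Icc
  have hUne : U.Nonempty := ⟨fun _ => 0, by
    intro j _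
    exact ⟨le_rfl, zero_le_one⟩⟩
  obtain ⟨ρ₀, hρ₀U, hminOn⟩ := hUc.exists_isMinOn hUne (continuous_eval h).continuousOn
  set θ2 : ℝ := eval ρ₀ h with hθ2def
  have hθ2 : 0 < θ2 := hpos ρ₀ ((memU ρ₀).1 hρ₀U)
  set θ : ℝ := θ2 / 2 with hθdef
  have hθpos : 0 < θ := by positivity
  set h' : A p := h - C θ with hh'
  have hgrid : ∀ ρ : Fin p → ℝ, (∀ j, 0 ≤ ρ j ∧ ρ j ≤ 1) → θ ≤ eval ρ h' := by
    intro ρ hρ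
    have hmem : ρ ∈ U := (memU ρ).2 hρ
    have := hminOn hmem
    simp only [Set.mem_setOf_eq] at this
    rw [hh', map_sub, eval_C]
    have h2 : θ2 ≤ eval ρ h := this
    rw [hθdef]
    linarith
  -- degree bound
  set d : ℕ := h'.totalDegree + 1 with hd
  have hd1 : 1 ≤ d := Nat.le_add_left 1 _
  have hdbound : ∀ κ ∈ h'.support, ∀ j, κ j ≤ d := by
    intro κ hκ j
    by_cases h0 : κ j = 0
    · omega
    · have hjs : j ∈ κ.support := Finsupp.mem_support_iff.2 h0
      have h1 : κ j ≤ κ.sum fun _ e => e := by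
        rw [Finsupp.sum]
        exact Finset.single_le_sum (f := fun i => κ i) (fun i _ => Nat.zero_le _) hjs
      have h2 := le_totalDegree hκ
      omega
  -- choose n
  set AA : ℝ := ∑ κ ∈ h'.support, |coeff κ h'| with hAA
  have hAnn : 0 ≤ AA := Finset.sum_nonneg fun κ _ => abs_nonneg _
  obtain ⟨N0, hN0⟩ := exists_nat_gt ((d:ℝ) + AA * p * (d:ℝ)^2 / θ)
  set n : ℕ := 2 * N0 with hn
  have hdN0 : d < N0 := by
    have h1 : (d:ℝ) < N0 := by
      have : 0 ≤ AA * p * (d:ℝ)^2 / θ := by positivity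
      linarith
    exact_mod_cast h1
  have hnd : 2*d ≤ n := by omega
  have hneven : Even n := ⟨N0, by omega⟩
  have hnR : ((n:ℝ)) = 2 * (N0:ℝ) := by exact_mod_cast rfl
  have hndR : (0:ℝ) < (n:ℝ) - d := by
    have h1 : (d:ℝ) < (N0:ℝ) := by exact_mod_cast hdN0
    rw [hnR]; linarith
  have herr : AA * ((p : ℝ) * ((d:ℝ)^2 / ((n:ℝ) - d))) ≤ θ := by
    have hNn : (N0:ℝ) ≤ (n:ℝ) - d := by
      have h1 : (d:ℝ) < (N0:ℝ) := by exact_mod_cast hdN0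
      rw [hnR]; linarith
    have h2 : AA * (p:ℝ) * (d:ℝ)^2 / θ < (N0:ℝ) := by
      have : 0 ≤ (d:ℝ) := by positivity
      linarith [hN0]
    have h3 : AA * (p:ℝ) * (d:ℝ)^2 < θ * (N0:ℝ) := by
      rw [div_lt_iff₀ hθpos] at h2
      linarith
    have h4 : AA * ((p : ℝ) * ((d:ℝ)^2 / ((n:ℝ) - d))) = AA * (p:ℝ) * (d:ℝ)^2 / ((n:ℝ) - d) := by
      ring
    rw [h4, div_le_iff₀ hndR]
    have h5 : θ * (N0:ℝ) ≤ θ * ((n:ℝ) - d) := by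
      exact mul_le_mul_of_nonneg_left hNn hθpos.le
    linarith
  -- Bernstein identity for h'
  have hdeg : ∀ κ ∈ h'.support, ∀ j, κ j ≤ n := fun κ hκ j =>
    le_trans (hdbound κ hκ j) (by omega)
  have hident := bern_identity h' n hdeg
  have hlamnn : ∀ α ∈ Fintype.piFinset (fun _ : Fin p => Finset.range (n+1)),
      0 ≤ lam h' n α := by
    intro α hα
    have hαn : ∀ j, α j ≤ n := by
      intro j
      have := Fintype.mem_piFinset.1 hα j
      rw [Finset.mem_range] at this
      omega
    exact lam_nonneg h' θ hgrid n d hd1 hdbound hnd herr α hαn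
  refine ⟨θ, hθpos, ?_⟩
  intro L hL hL1
  -- L h = L h' + θ
  have hsplit : L h = L h' + θ := by
    have : h = h' + C θ := by rw [hh']; ring
    rw [this, map_add]
    have : (C θ : A p) = θ • 1 := by rw [smul_eq_C_mul, mul_one]
    rw [this, map_smul, hL1, smul_eq_mul, mul_one]
  have hLh' : 0 ≤ L h' := by
    rw [hident, map_sum]
    refine Finset.sum_nonneg fun α hα => ?_
    have : (C (lam h' n α) * bb n α) = (lam h' n α) • bb n α := by
      rw [smul_eq_C_mul]
    rw [this, map_smul, smul_eq_mul]
    refine mul_nonneg (hlamnn α hα) ?_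
    -- L (bb n α) ≥ 0
    have hαn : ∀ j, α j ≤ n := by
      intro j
      have := Fintype.mem_piFinset.1 hα j
      rw [Finset.mem_range] at this
      omega
    obtain ⟨g, hg⟩ := bb_decomp n hneven α hαn
    rw [hg]
    exact L_sq_prod_nonneg hL g _
  linarith [hsplit, hLh']

/-- Core Putinar theorem over the unit box. -/
theorem core (G : A p) (hpos : ∀ ρ : Fin p → ℝ, (∀ j, 0 ≤ ρ j ∧ ρ j ≤ 1) → 0 < eval ρ G) :
    ∃ θ : ℝ, 0 < θ ∧ InM (G - C θ) := by
  obtain ⟨θ, hθ, hLbound⟩ := bern_main G hpos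
  refine ⟨θ/2, by positivity, ?_⟩
  by_contra hnot
  obtain ⟨L, hL1, hLM, hLf⟩ := exists_L _ hnot
  have h1 : L G ≤ θ/2 := by
    have e : G = (G - C (θ/2)) + C (θ/2) := by ring
    have e2 : L G = L (G - C (θ/2)) + (θ/2) := by
      conv_lhs => rw [e]
      rw [map_add]
      have : (C (θ/2) : A p) = (θ/2) • 1 := by rw [smul_eq_C_mul, mul_one]
      rw [this, map_smul, hL1, smul_eq_mul, mul_one]
    rw [e2]
    linarith
  have h2 := hLbound L hLM hL1
  linarith

end Putinar

namespace Putinar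

variable {p : ℕ}

lemma aeval_self_eq_eval (f : Fin p → ℝ) (q : A p) : aeval f q = eval f q := by
  rw [← coe_aeval_eq_eval]
  rfl

lemma eval_bind (ρ : Fin p → ℝ) (g : Fin p → A p) (φ : A p) :
    eval ρ (bind₁ g φ) = eval (fun j => eval ρ (g j)) φ := by
  rw [← aeval_self_eq_eval, aeval_bind₁]
  rw [show (fun i => aeval ρ (g i)) = fun j => eval ρ (g j) by
    funext j; rw [aeval_self_eq_eval]]
  rw [aeval_self_eq_eval]

lemma sos_map (Φ : A p →ₐ[ℝ] A p) {q : A p} (hq : IsSOS q) : IsSOS (Φ q) := by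
  obtain ⟨k, g, rfl⟩ := hq
  exact ⟨k, fun i => Φ (g i), by rw [map_sum]; exact Finset.sum_congr rfl fun i _ => by rw [map_pow]⟩

end Putinar

open Putinar

theorem stmt_0 (p m : ℕ) (hp : 1 ≤ p) (lo hi : Fin p → ℝ)
    (hlohi : ∀ j, lo j < hi j) (f : Fin m → MvPolynomial (Fin p) ℝ) :
    (∀ i : Fin m, ∀ ρ : Fin p → ℝ, (∀ j, lo j ≤ ρ j ∧ ρ j ≤ hi j) →
        0 < MvPolynomial.eval ρ (f i)) ↔
      (∃ θ : ℝ, 0 < θ ∧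
        ∃ s : Fin m → Fin p → MvPolynomial (Fin p) ℝ,
          (∀ i j, IsSOS (s i j)) ∧
          ∀ i : Fin m,
            IsSOS (f i - (∑ j, s i j * ((C (hi j) - X j) * (X j - C (lo j)))) - C θ)) := by
  set r : Fin p → ℝ := fun j => hi j - lo j with hr
  have hrpos : ∀ j, 0 < r j := fun j => sub_pos.2 (hlohi j)
  constructor
  · -- forward direction
    intro hpos
    rcases Nat.eq_zero_or_pos m with hm | hm
    · subst hm
      exact ⟨1, one_pos, fun i j => 0, fun i => i.elim0, fun i => i.elim0⟩
    -- the affine substitutions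
    set Φg : Fin p → A p := fun j => C (lo j) + C (r j) * X j with hΦg
    set Ψg : Fin p → A p := fun j => C ((r j)⁻¹) * (X j - C (lo j)) with hΨg
    set G : Fin m → A p := fun i => bind₁ Φg (f i) with hG
    -- positivity of G on unit box
    have hGpos : ∀ i, ∀ ρ : Fin p → ℝ, (∀ j, 0 ≤ ρ j ∧ ρ j ≤ 1) → 0 < eval ρ (G i) := by
      intro i ρ hρ
      rw [hG, eval_bind]
      apply hpos
      intro j
      have h1 := (hρ j).1
      have h2 := (hρ j).2
      have he : eval ρ (Φg j) = lo j + r j * ρ j := by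
        rw [hΦg]
        simp [eval_X, eval_C]
      rw [he]
      constructor
      · nlinarith [hrpos j]
      · have hle : r j * ρ j ≤ r j := by nlinarith [hrpos j]
        have hrj : r j = hi j - lo j := by rw [hr]
        rw [hrj] at hle
        rw [hrj]
        linarith
    -- apply the core theorem for each i
    have hcore : ∀ i, ∃ t : ℝ, 0 < t ∧ InM (G i - C t) := fun i => core (G i) (hGpos i)
    choose th hth hInM using hcore
    have hrep : ∀ i, ∃ σ : A p, ∃ sM : Fin p → A p, IsSOS σ ∧ (∀ j, IsSOS (sM j)) ∧
        G i - C (th i) = σ + ∑ j, sM j * cU j := fun i => hInM i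
    choose σ sM hσ hsM heq using hrep
    -- the inverse substitution
    have hrr : ∀ j, (C (r j) : A p) * C ((r j)⁻¹) = 1 := by
      intro j
      rw [← C_mul, mul_inv_cancel₀ (hrpos j).ne', C_1]
    have hcomp : ∀ q : A p, bind₁ Ψg (bind₁ Φg q) = q := by
      intro q
      rw [bind₁_bind₁]
      have hgen : ∀ j, bind₁ Ψg (Φg j) = X j := by
        intro j
        rw [hΦg]
        simp only [map_add, map_mul, bind₁_X_right, bind₁_C_right]
        rw [hΨg]
        linear_combination (X j - C (lo j)) * hrr j
      rw [show (fun j => bind₁ Ψg (Φg j)) = (X : Fin p → A p) from funext hgen, bind₁_X_left]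
      rfl
    have hhi : ∀ j, (C (hi j) : A p) = C (lo j) + C (r j) := by
      intro j
      rw [← C_add]
      congr 1
      rw [hr]
      ring
    have hΨcU : ∀ j, bind₁ Ψg (cU j)
        = (C ((r j)⁻¹))^2 * ((C (hi j) - X j) * (X j - C (lo j))) := by
      intro j
      unfold cU
      rw [map_mul, map_sub, map_one, bind₁_X_right, hΨg, hhi j]
      linear_combination (-(C ((r j)⁻¹) * (X j - C (lo j)))) * hrr j
    -- transported identity
    set s' : Fin m → Fin p → A p :=
      fun i j => (C ((r j)⁻¹))^2 * bind₁ Ψg (sM i j) with hs'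
    have hident : ∀ i, f i - C (th i)
        = bind₁ Ψg (σ i) + ∑ j, s' i j * ((C (hi j) - X j) * (X j - C (lo j))) := by
      intro i
      have h0 := congrArg (bind₁ Ψg) (heq i)
      rw [map_sub, bind₁_C_right, map_add, map_sum] at h0
      rw [hG] at h0
      rw [hcomp (f i)] at h0
      rw [h0]
      congr 1
      refine Finset.sum_congr rfl fun j _ => ?_
      rw [map_mul, hΨcU j, hs']
      ring
    -- uniform θ
    have hne : (Finset.univ : Finset (Fin m)).Nonempty := by
      refine ⟨⟨0, hm⟩, Finset.mem_univ _⟩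
    set θ : ℝ := Finset.univ.inf' hne th with hθdef
    have hθpos : 0 < θ := by
      rw [hθdef, Finset.lt_inf'_iff]
      exact fun i _ => hth i
    have hθle : ∀ i, θ ≤ th i := fun i => Finset.inf'_le _ (Finset.mem_univ i)
    refine ⟨θ, hθpos, s', ?_, ?_⟩
    · intro i j
      rw [hs']
      exact sos_mul (sos_sq _) (sos_map _ (hsM i j))
    · intro i
      have e : f i - (∑ j, s' i j * ((C (hi j) - X j) * (X j - C (lo j)))) - C θ
          = bind₁ Ψg (σ i) + C (th i - θ) := by
        rw [map_sub]
        linear_combination hident i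
      rw [e]
      exact sos_add (sos_map _ (hσ i)) (sos_const (by linarith [hθle i]))
  · -- backward direction
    rintro ⟨θ, hθ, s, hsos, hall⟩ i ρ hρ
    have h1 := sos_eval_nonneg (hall i) ρ
    rw [map_sub, map_sub, map_sum, eval_C] at h1
    have h2 : ∀ j ∈ (Finset.univ : Finset (Fin p)),
        (0:ℝ) ≤ eval ρ (s i j * ((C (hi j) - X j) * (X j - C (lo j)))) := by
      intro j _
      rw [map_mul]
      refine mul_nonneg (sos_eval_nonneg (hsos i j) ρ) ?_
      rw [map_mul, map_sub, map_sub, eval_C, eval_C, eval_X]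
      have := hρ j
      nlinarith [this.1, this.2]
    have h3 : 0 ≤ ∑ j, eval ρ (s i j * ((C (hi j) - X j) * (X j - C (lo j)))) :=
      Finset.sum_nonneg h2
    linarith
end

section
/- Let a, b, c be univariate real polynomials and γ a real number, and let F be the symmetric 3×3 matrix of univariate real polynomials with rows (a, γ·b, γ·c), (γ·b, 1, 0), (γ·c, 0, 1) (constants regarded as constant polynomials). Then a(ω) − γ²·(b(ω)² + c(ω)²) ≥ 0 for all ω ∈ ℝ if and only if there exist finitely many 3×3 matrices G_1,…,G_k with univariate real polynomial entries such that F = ∑_{i=1}^k G_iᵀ · G_i. -/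
open Polynomial Matrix

lemma isSumSq_sq_mul {R : Type*} [CommSemiring R] (a : R) {y : R} (hy : IsSumSq y) :
    IsSumSq (a * a * y) := by
  induction hy with
  | zero => simpa using IsSumSq.zero
  | sq_add b pT ih2 =>
    rw [mul_add]
    have : a * a * (b * b) = (a * b) * (a * b) := by ring
    rw [this]
    exact IsSumSq.sq_add _ ih2

lemma isSumSq_mul {R : Type*} [CommSemiring R] {x y : R} (hx : IsSumSq x) (hy : IsSumSq y) :
    IsSumSq (x * y) := by
  induction hx with
  | zero => simpa using IsSumSq.zero
  | sq_add a pS ih =>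
    rw [add_mul]
    exact IsSumSq.add (isSumSq_sq_mul a hy) ih

lemma nonneg_isSumSq_aux (n : ℕ) : ∀ p : Polynomial ℝ, p.natDegree = n →
    (∀ x : ℝ, 0 ≤ p.eval x) → IsSumSq p := by
  induction n using Nat.strong_induction_on with
  | _ n ih =>
  intro p h hp
  rcases Nat.eq_zero_or_pos n with hn | hn
  · -- constant
    subst hn
    have hc : p = C (p.coeff 0) := p.eq_C_of_natDegree_eq_zero h
    have h0 : 0 ≤ p.coeff 0 := by rw [coeff_zero_eq_eval_zero]; exact hp 0
    have : p = C (Real.sqrt (p.coeff 0)) * C (Real.sqrt (p.coeff 0)) + 0 := by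
      rw [← C_mul, Real.mul_self_sqrt h0, add_zero, ← hc]
    rw [this]
    exact IsSumSq.sq_add _ IsSumSq.zero
  · have hp0 : p ≠ 0 := fun h0 => by simp [h0] at h; omega
    by_cases hroot : ∃ x : ℝ, p.eval x = 0
    · obtain ⟨ω, hω⟩ := hroot
      -- derivative vanishes at ω
      have hmin : IsLocalMin (fun x => p.eval x) ω := by
        apply Filter.Eventually.of_forall
        intro x
        simp only [hω]
        exact hp x
      have hderiv : p.derivative.eval ω = 0 := by
        rw [← Polynomial.deriv]
        exact hmin.deriv_eq_zero
      -- (X - C ω)^2 divides p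
      obtain ⟨q, hq⟩ := (dvd_iff_isRoot.mpr hω)
      have hqω : q.eval ω = 0 := by
        have := congrArg (fun r => Polynomial.eval ω (Polynomial.derivative r)) hq
        simp only [derivative_mul, derivative_sub, derivative_X, derivative_C, sub_zero,
          one_mul, eval_add, eval_mul, eval_sub, eval_X, eval_C, sub_self, zero_mul,
          add_zero, zero_add] at this
        rw [hderiv] at this
        linarith [this]
      obtain ⟨r, hr⟩ := (dvd_iff_isRoot.mpr hqω)
      have hpr : p = (X - C ω) ^ 2 * r := by rw [hq, hr]; ring
      have hr0 : r ≠ 0 := by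
        intro h0; rw [h0, mul_zero] at hpr; exact hp0 hpr
      -- r is nonneg away from ω
      have hrnn' : ∀ x : ℝ, x ≠ ω → 0 ≤ r.eval x := by
        intro x hx
        have hpx := hp x
        rw [hpr] at hpx
        simp only [eval_mul, eval_pow, eval_sub, eval_X, eval_C] at hpx
        have hpos : 0 < (x - ω) ^ 2 := by
          have hne := sub_ne_zero.mpr hx
          positivity
        nlinarith
      have hrnn : ∀ x : ℝ, 0 ≤ r.eval x := by
        intro x
        rcases eq_or_ne x ω with rfl | hx
        · by_contra hneg
          push_neg at hneg
          have hc : Filter.Tendsto (fun y => r.eval y) (nhds x) (nhds (r.eval x)) :=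
            (r.continuous_aeval).tendsto x
          have hev : ∀ᶠ y in nhds x, r.eval y < 0 := hc.eventually_lt_const hneg
          have hev' : ∀ᶠ y in nhdsWithin x {x}ᶜ, r.eval y < 0 :=
            hev.filter_mono nhdsWithin_le_nhds
          obtain ⟨y, hy1, hy2⟩ := (hev'.and self_mem_nhdsWithin).exists
          exact absurd (hrnn' y hy2) (not_le.mpr hy1)
        · exact hrnn' x hx
      have hdeg : r.natDegree < n := by
        have h2 : ((X - C ω) ^ 2 : Polynomial ℝ).natDegree = 2 := by
          compute_degree!
        have hmul := natDegree_mul (pow_ne_zero 2 (X_sub_C_ne_zero ω)) hr0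
        rw [← hpr, h2, h] at hmul
        omega
      have hIr : IsSumSq r := ih r.natDegree hdeg r rfl hrnn
      have hsq : IsSumSq ((X - C ω) * (X - C ω) : Polynomial ℝ) := by
        rw [← add_zero ((X - C ω) * (X - C ω))]
        exact IsSumSq.sq_add _ IsSumSq.zero
      rw [hpr, sq]
      exact isSumSq_mul hsq hIr
    · -- p has no real root; find complex root
      push_neg at hroot
      have hdegpos : 0 < (p.map (algebraMap ℝ ℂ)).degree := by
        rw [degree_map_eq_of_injective (algebraMap ℝ ℂ).injective]
        exact natDegree_pos_iff_degree_pos.mp (by omega : 0 < p.natDegree)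
      obtain ⟨z, hz⟩ := Complex.exists_root hdegpos
      have hza : aeval z p = 0 := by
        rwa [aeval_def, ← eval_map]
      have him : z.im ≠ 0 := by
        intro h0
        have hzre : z = (z.re : ℂ) := by
          apply Complex.ext <;> simp [h0]
        rw [hzre] at hza
        have hcast : ((p.eval z.re : ℝ) : ℂ) = 0 := by
          rw [← hza]
          rw [show ((z.re : ℝ) : ℂ) = algebraMap ℝ ℂ z.re from rfl,
            aeval_algebraMap_apply_eq_algebraMap_eval]
          rfl
        exact hroot z.re (by exact_mod_cast hcast)
      obtain ⟨r, hr⟩ := p.quadratic_dvd_of_aeval_eq_zero_im_ne_zero hza him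
      set q : Polynomial ℝ := X ^ 2 - C (2 * z.re) * X + C (‖z‖ ^ 2) with hqdef
      have hnorm : ‖z‖ ^ 2 = z.re ^ 2 + z.im ^ 2 := by
        rw [Complex.sq_norm, Complex.normSq_apply]; ring
      have hqeval : ∀ x : ℝ, 0 < q.eval x := by
        intro x
        simp only [hqdef, eval_add, eval_sub, eval_pow, eval_mul, eval_X, eval_C, hnorm]
        have him2 : 0 < z.im ^ 2 := by positivity
        nlinarith [sq_nonneg (x - z.re)]
      have hr0 : r ≠ 0 := by
        intro h0; rw [h0, mul_zero] at hr; exact hp0 hr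
      have hq0 : q ≠ 0 := by
        intro h0
        have := hqeval 0
        rw [h0] at this; simp at this
      have hrnn : ∀ x : ℝ, 0 ≤ r.eval x := by
        intro x
        have hpx := hp x
        rw [hr] at hpx
        simp only [eval_mul] at hpx
        nlinarith [hqeval x]
      have hqdeg : q.natDegree = 2 := by
        rw [hqdef]
        compute_degree!
      have hdeg : r.natDegree < n := by
        have hmul := natDegree_mul hq0 hr0
        rw [← hr, hqdeg, h] at hmul
        omega
      have hIr : IsSumSq r := ih r.natDegree hdeg r rfl hrnn
      have hqsum : IsSumSq q := by
        have hq2 : q = (X - C z.re) * (X - C z.re) + (C z.im * C z.im + 0) := by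
          rw [hqdef, hnorm]
          simp only [C_add, C_mul, C_pow, map_ofNat]
          ring
        rw [hq2]
        exact IsSumSq.sq_add _ (IsSumSq.sq_add _ IsSumSq.zero)
      rw [hr]
      exact isSumSq_mul hqsum hIr

lemma nonneg_isSumSq (p : Polynomial ℝ) (hp : ∀ x : ℝ, 0 ≤ p.eval x) : IsSumSq p :=
  nonneg_isSumSq_aux p.natDegree p rfl hp


lemma isSumSq_fin_sum {p : Polynomial ℝ} (h : IsSumSq p) :
    ∃ (n : ℕ) (f : Fin n → Polynomial ℝ), p = ∑ i, f i ^ 2 := by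
  induction h with
  | zero => exact ⟨0, Fin.elim0, by simp⟩
  | sq_add a pS ih =>
    obtain ⟨n, f, hf⟩ := ih
    refine ⟨n + 1, Fin.cons a f, ?_⟩
    rw [Fin.sum_univ_succ]
    simp [hf, sq]

lemma dot_tAA_nonneg {n : ℕ} (A : Matrix (Fin n) (Fin n) ℝ) (x : Fin n → ℝ) :
    0 ≤ x ⬝ᵥ (Aᵀ * A) *ᵥ x := by
  rw [← Matrix.mulVec_mulVec, Matrix.dotProduct_mulVec, Matrix.vecMul_transpose]
  exact Finset.sum_nonneg fun i _ => mul_self_nonneg _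

lemma dot_sum_mulVec {k : ℕ} (A : Fin k → Matrix (Fin 3) (Fin 3) ℝ) (x : Fin 3 → ℝ) :
    x ⬝ᵥ (∑ i, A i) *ᵥ x = ∑ i, x ⬝ᵥ (A i) *ᵥ x := by
  simp only [dotProduct, Matrix.mulVec, Matrix.sum_apply, Fin.sum_univ_three,
    mul_add, add_mul, Finset.mul_sum, Finset.sum_mul, Finset.sum_add_distrib, mul_assoc]

theorem stmt_5 (a b c : Polynomial ℝ) (γ : ℝ) :
    (∀ ω : ℝ, 0 ≤ a.eval ω - γ ^ 2 * ((b.eval ω) ^ 2 + (c.eval ω) ^ 2)) ↔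
      ∃ (k : ℕ) (G : Fin k → Matrix (Fin 3) (Fin 3) (Polynomial ℝ)),
        (!![a, C γ * b, C γ * c; C γ * b, 1, 0; C γ * c, 0, 1] :
            Matrix (Fin 3) (Fin 3) (Polynomial ℝ)) = ∑ i, (G i).transpose * G i := by
  constructor
  · intro hnn
    have hpoly : ∀ x : ℝ, 0 ≤ (a - C (γ ^ 2) * (b ^ 2 + c ^ 2)).eval x := by
      intro x; simpa using hnn x
    obtain ⟨n, f, hf⟩ := isSumSq_fin_sum (nonneg_isSumSq _ hpoly)
    have ha : a = C (γ ^ 2) * (b ^ 2 + c ^ 2) + ∑ i, f i ^ 2 := by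
      rw [← hf]; ring
    set v : Fin (n + 2) → Fin 3 → Polynomial ℝ :=
      Fin.cons ![C γ * b, 1, 0] (Fin.cons ![C γ * c, 0, 1] (fun i => ![f i, 0, 0])) with hv
    set M : Fin (n + 2) → Matrix (Fin 3) (Fin 3) (Polynomial ℝ) :=
      fun i => Matrix.of (fun r s => if r = 0 then v i s else 0) with hM
    refine ⟨n + 2, M, Matrix.ext fun r s => ?_⟩
    have hentry : ∀ i, ((M i)ᵀ * M i) r s = v i r * v i s := by
      intro i
      rw [Matrix.mul_apply]
      simp [hM, Fin.sum_univ_three]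
    rw [Matrix.sum_apply]
    simp only [hentry]
    rw [Fin.sum_univ_succ, Fin.sum_univ_succ]
    simp only [hv, Fin.cons_zero, Fin.cons_succ]
    fin_cases r <;> fin_cases s <;>
      simp <;>
      rw [ha] <;> simp only [pow_two, C_mul] <;> ring
  · rintro ⟨k, G, hG⟩ ω
    set φ := evalRingHom ω
    have hmap := congrArg (RingHom.mapMatrix φ :
      Matrix (Fin 3) (Fin 3) (Polynomial ℝ) →+* Matrix (Fin 3) (Fin 3) ℝ) hG
    rw [map_sum] at hmap
    set x : Fin 3 → ℝ := ![1, -(γ * b.eval ω), -(γ * c.eval ω)] with hx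
    have hnn : 0 ≤ x ⬝ᵥ (∑ i, (RingHom.mapMatrix φ) ((G i)ᵀ * G i)) *ᵥ x := by
      rw [dot_sum_mulVec]
      refine Finset.sum_nonneg fun i _ => ?_
      rw [_root_.map_mul]
      have ht : (RingHom.mapMatrix φ) (G i)ᵀ = ((RingHom.mapMatrix φ) (G i))ᵀ := by
        simp [RingHom.mapMatrix_apply, Matrix.transpose_map]
      rw [ht]
      exact dot_tAA_nonneg _ x
    rw [← hmap] at hnn
    have hcalc : x ⬝ᵥ ((RingHom.mapMatrix φ)
        (!![a, C γ * b, C γ * c; C γ * b, 1, 0; C γ * c, 0, 1] :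
          Matrix (Fin 3) (Fin 3) (Polynomial ℝ))) *ᵥ x
        = a.eval ω - γ ^ 2 * ((b.eval ω) ^ 2 + (c.eval ω) ^ 2) := by
      simp [RingHom.mapMatrix_apply, Matrix.mulVec, dotProduct, Fin.sum_univ_three,
        Matrix.map_apply, hx, φ]
      ring
    rwa [hcalc] at hnn
end

section
/- Let n be a natural number and let p be a univariate real polynomial of degree at most n, regarded as a complex polynomial via ℝ ⊆ ℂ. Then there exist univariate real polynomials p₁ and p₂ such that for every y ∈ ℝ, (1 + y²)ⁿ · p(φ(y)) = p₁(y) + i·p₂(y), where φ(y) = (1 − y² + 2yi)/(1 + y²). -/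
open Polynomial Complex

lemma exists_re_im_poly (Q : Polynomial ℂ) :
    ∃ A B : Polynomial ℝ, ∀ y : ℝ,
      Q.eval (y : ℂ) = Complex.ofReal (A.eval y) + Complex.ofReal (B.eval y) * Complex.I := by
  induction Q using Polynomial.induction_on' with
  | add p q hp hq =>
    obtain ⟨A₁, B₁, h₁⟩ := hp
    obtain ⟨A₂, B₂, h₂⟩ := hq
    refine ⟨A₁ + A₂, B₁ + B₂, fun y => ?_⟩
    simp [h₁ y, h₂ y]
    ring
  | monomial k a =>
    refine ⟨Polynomial.monomial k a.re, Polynomial.monomial k a.im, fun y => ?_⟩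
    simp [Polynomial.eval_monomial]
    nth_rewrite 1 [← Complex.re_add_im a]
    ring

theorem stmt_11 (n : ℕ) (p : Polynomial ℝ) (hdeg : p.natDegree ≤ n) :
    ∃ p₁ p₂ : Polynomial ℝ, ∀ y : ℝ,
      (1 + (y : ℂ) ^ 2) ^ n *
          Polynomial.aeval
            ((1 - (y : ℂ) ^ 2 + 2 * (y : ℂ) * Complex.I) / (1 + (y : ℂ) ^ 2)) p =
        Complex.ofReal (p₁.eval y) + Complex.ofReal (p₂.eval y) * Complex.I := by
  set Q : Polynomial ℂ :=
    ∑ k ∈ Finset.range (n + 1),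
      Polynomial.C ((p.coeff k : ℂ)) *
        (1 - Polynomial.X ^ 2 + Polynomial.C (2 * Complex.I) * Polynomial.X) ^ k *
        (1 + Polynomial.X ^ 2) ^ (n - k) with hQ
  obtain ⟨A, B, hAB⟩ := exists_re_im_poly Q
  refine ⟨A, B, fun y => ?_⟩
  rw [← hAB y]
  have hden : (1 + (y : ℂ) ^ 2) ≠ 0 := by
    intro h
    have : ((1 + y ^ 2 : ℝ) : ℂ) = 0 := by push_cast; linear_combination h
    have h2 : (1 + y ^ 2 : ℝ) = 0 := by exact_mod_cast this
    nlinarith [sq_nonneg y]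
  rw [Polynomial.aeval_eq_sum_range' (lt_of_le_of_lt hdeg (Nat.lt_succ_self n))]
  rw [hQ, Polynomial.eval_finset_sum, Finset.mul_sum]
  refine Finset.sum_congr rfl fun k hk => ?_
  have hkn : k ≤ n := Nat.lt_succ_iff.mp (Finset.mem_range.mp hk)
  simp only [Polynomial.eval_mul, Polynomial.eval_pow, Polynomial.eval_add,
    Polynomial.eval_sub, Polynomial.eval_one, Polynomial.eval_X, Polynomial.eval_C,
    Algebra.smul_def, Complex.coe_algebraMap]
  have hsplit : (1 + (y : ℂ) ^ 2) ^ n =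
      (1 + (y : ℂ) ^ 2) ^ k * (1 + (y : ℂ) ^ 2) ^ (n - k) := by
    rw [← pow_add, Nat.add_sub_cancel' hkn]
  rw [hsplit, div_pow]
  field_simp
end

section
/- Let p be a univariate real polynomial with natDegree p ≤ 2d. Then p can be written as a finite sum of squares of univariate real polynomials if and only if there exists a positive semidefinite real symmetric matrix Q of size (d+1)×(d+1), indexed by i, j ∈ {0,…,d}, such that for every x ∈ ℝ, p(x) = ∑_{i=0}^{d} ∑_{j=0}^{d} Q_{ij} · x^{i+j}. -/
/-!
A positive semidefinite matrix is a sum of rank-one matrices `v vᵀ`, and the Gram form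
`∑ i j, (v vᵀ) i j * x ^ (i + j)` of such a matrix is `(∑ i, v i * x ^ i) ^ 2`, the square of the
polynomial with coefficient vector `v`. Conversely, the coefficient vectors of the `g i` in
`p = ∑ i, g i ^ 2` give a Gram matrix `∑ i, c i c iᵀ`; they fit into `d + 1` entries because
leading coefficients of squares are positive and so cannot cancel, forcing `2 * deg g i ≤ deg p`.
-/

open Polynomial Matrix Finset

theorem two_mul_natDegree_le_natDegree_sum_sq {R ι : Type*} [CommRing R] [LinearOrder R]
    [IsStrictOrderedRing R] {s : Finset ι} {g : ι → R[X]} {i : ι} (hi : i ∈ s) :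
    2 * (g i).natDegree ≤ (∑ k ∈ s, g k ^ 2).natDegree := by
  obtain ⟨j, hj, hmax⟩ := s.exists_max_image (fun k ↦ (g k).natDegree) ⟨i, hi⟩
  rcases eq_or_ne (g j) 0 with hzero | hne
  · have := hmax i hi
    simp_all
  set n := (g j).natDegree
  have hcoeff : (∑ k ∈ s, g k ^ 2).coeff (2 * n) = ∑ k ∈ s, (g k).coeff n ^ 2 := by
    rw [finsetSum_coeff]
    exact sum_congr rfl fun k hk ↦ coeff_pow_of_natDegree_le (hmax k hk)
  have hpos : 0 < ∑ k ∈ s, (g k).coeff n ^ 2 := calc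
    0 < (g j).leadingCoeff ^ 2 := sq_pos_iff.2 (leadingCoeff_ne_zero.2 hne)
    _ ≤ _ := single_le_sum (fun k _ ↦ sq_nonneg ((g k).coeff n)) hj
  calc 2 * (g i).natDegree ≤ 2 * n := Nat.mul_le_mul_left 2 (hmax i hi)
    _ ≤ _ := le_natDegree_of_ne_zero (hcoeff ▸ hpos.ne')

theorem sum_sum_sum_vecMulVec_mul_pow {R ι : Type*} [CommSemiring R] [Fintype ι] {n : ℕ}
    (v : ι → Fin n → R) (x : R) :
    ∑ i : Fin n, ∑ j : Fin n, (∑ k, vecMulVec (v k) (v k)) i j * x ^ ((i : ℕ) + (j : ℕ)) =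
      ∑ k, (∑ i : Fin n, v k i * x ^ (i : ℕ)) ^ 2 := by
  simp only [sq, Matrix.sum_apply, vecMulVec_apply, sum_mul, mul_sum, pow_add]
  conv_rhs => rw [sum_comm]
  refine sum_congr rfl fun i _ ↦ ?_
  rw [sum_comm]
  exact sum_congr rfl fun j _ ↦ sum_congr rfl fun k _ ↦ by ring

theorem eval_coe_degreeLT {R : Type*} [CommRing R] {n : ℕ} (q : degreeLT R n) (x : R) :
    (q : R[X]).eval x = ∑ i, degreeLTEquiv R n q i * x ^ (i : ℕ) :=
  eval_eq_sum_degreeLTEquiv q.2 x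

theorem stmt_12 (d : ℕ) (p : Polynomial ℝ) (hdeg : p.natDegree ≤ 2 * d) :
    (∃ (k : ℕ) (g : Fin k → Polynomial ℝ), p = ∑ i, (g i) ^ 2) ↔
      ∃ Q : Matrix (Fin (d + 1)) (Fin (d + 1)) ℝ, Q.PosSemidef ∧
        ∀ x : ℝ, p.eval x = ∑ i : Fin (d + 1), ∑ j : Fin (d + 1),
          Q i j * x ^ ((i : ℕ) + (j : ℕ)) := by
  constructor
  · rintro ⟨k, g, rfl⟩
    have hg (i : Fin k) : g i ∈ degreeLT ℝ (d + 1) := by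
      have := (two_mul_natDegree_le_natDegree_sum_sq (g := g) (mem_univ i)).trans hdeg
      rw [degreeLT_succ_eq_degreeLE, mem_degreeLE]
      exact degree_le_of_natDegree_le (by omega)
    let c (i : Fin k) := degreeLTEquiv ℝ (d + 1) ⟨g i, hg i⟩
    refine ⟨∑ i, vecMulVec (c i) (c i), posSemidef_iff_eq_sum_vecMulVec.2 ⟨k, c, by simp⟩,
      fun x ↦ ?_⟩
    rw [sum_sum_sum_vecMulVec_mul_pow, eval_finsetSum]
    exact sum_congr rfl fun i _ ↦ by rw [eval_pow, ← eval_coe_degreeLT ⟨g i, hg i⟩]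
  · rintro ⟨Q, hQ, hp⟩
    obtain ⟨k, v, rfl⟩ := posSemidef_iff_eq_sum_vecMulVec.1 hQ
    refine ⟨k, fun i ↦ (degreeLTEquiv ℝ (d + 1)).symm (v i), Polynomial.funext fun x ↦ ?_⟩
    simp [hp, sum_sum_sum_vecMulVec_mul_pow, eval_finsetSum, eval_coe_degreeLT]
end
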